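/- arXiv:1108.0128 — 3 statements merged into one kernel-verified Lean document; each statement's English description precedes it below -/
import Mathlib

section
/- Let τ₁ < τ₂ be positive reals and fix a sequence of channel-availability outcomes. Consider two debt-based transmission policies with parameters τ₁ and τ₂ respectively: in slot t, policy τ transmits (successfully, if the channel is available) exactly when its accumulated count of past successful transmissions A_t satisfies A_t < τ·t. Then for every integer k ≥ 1, the slot in which policy τ₂ achieves its k-th successful transmission is no later than the slot in which policy τ₁ achieves its k-th successful transmission. -/
open scoped Classical

/-- Debt-based policy counting process: `debtA τ avail t` is the number of successful
transmissions accumulated before slot `t` (with conventions `A_0 = A_1 = 0`).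
In slot `t` the policy transmits iff `A_t < τ·t`, and the transmission succeeds iff the
channel is available in slot `t`. -/
noncomputable def debtA (τ : ℝ) (avail : ℕ → Bool) : ℕ → ℕ
  | 0 => 0
  | t + 1 =>
      if ((debtA τ avail t : ℝ) < τ * t ∧ avail t = true) then debtA τ avail t + 1
      else debtA τ avail t

lemma debtA_step (τ : ℝ) (avail : ℕ → Bool) (t : ℕ) :
    debtA τ avail (t + 1) = debtA τ avail t ∨
      debtA τ avail (t + 1) = debtA τ avail t + 1 := by
  rw [debtA]
  split <;> simp

lemma debtA_mono_param (τ₁ τ₂ : ℝ) (hτ : τ₁ ≤ τ₂) (avail : ℕ → Bool) :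
    ∀ t, debtA τ₁ avail t ≤ debtA τ₂ avail t := by
  intro t
  induction t with
  | zero => simp [debtA]
  | succ t ih =>
    rw [debtA, debtA]
    split
    · rename_i h1
      split
      · omega
      · rename_i h2
        rcases lt_or_eq_of_le ih with h | h
        · omega
        · exfalso
          apply h2
          refine ⟨?_, h1.2⟩
          rw [← h]
          calc ((debtA τ₁ avail t : ℝ)) < τ₁ * t := h1.1
            _ ≤ τ₂ * t := by nlinarith [Nat.cast_nonneg (α := ℝ) t]
    · split <;> omega

lemma debtA_reach (τ : ℝ) (avail : ℕ → Bool) (k : ℕ) :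
    ∀ t, k ≤ debtA τ avail t → ∃ u ≤ t, debtA τ avail u = k := by
  intro t
  induction t with
  | zero => intro h; exact ⟨0, le_refl 0, by simp [debtA] at h ⊢; omega⟩
  | succ t ih =>
    intro h
    by_cases hk : k ≤ debtA τ avail t
    · obtain ⟨u, hu, hu2⟩ := ih hk
      exact ⟨u, le_trans hu (Nat.le_succ t), hu2⟩
    · rcases debtA_step τ avail t with h' | h' <;>
        exact ⟨t + 1, le_refl _, by omega⟩

/-- For τ₁ < τ₂, on any fixed availability sequence, the policy with the larger parameter τ₂
achieves its k-th successful transmission no later than the policy with parameter τ₁. -/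
theorem kth_success_no_later (τ₁ τ₂ : ℝ) (hτ₁ : 0 < τ₁) (hτ : τ₁ < τ₂)
    (avail : ℕ → Bool) (k : ℕ) (hk : 1 ≤ k) (t : ℕ)
    (ht : debtA τ₁ avail (t + 1) = k) :
    ∃ s ≤ t, debtA τ₂ avail (s + 1) = k := by
  have hdom := debtA_mono_param τ₁ τ₂ hτ.le avail (t + 1)
  obtain ⟨u, hu, hu2⟩ := debtA_reach τ₂ avail k (t + 1) (by omega)
  match u, hu, hu2 with
  | 0, _, hu2 => simp [debtA] at hu2; omega
  | s + 1, hu, hu2 => exact ⟨s, by omega, hu2⟩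
end

section
/- Let τ₁ < τ₂ be positive reals. For the two debt-based policies on a common availability sequence (as in the model), the cumulative number of successful transmissions satisfies, for every horizon n, Σ_{t=1}^n r_t^{τ₁} ≤ Σ_{t=1}^n r_t^{τ₂}, i.e. A^{τ₁}_{n+1} ≤ A^{τ₂}_{n+1}. -/
open scoped Classical

lemma debtA_mono_tau (τ₁ τ₂ : ℝ) (hτ : τ₁ ≤ τ₂) (avail : ℕ → Bool) (t : ℕ) :
    debtA τ₁ avail t ≤ debtA τ₂ avail t := by
  induction t with
  | zero => simp [debtA]
  | succ t ih =>
    rw [debtA, debtA]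
    split_ifs with h1 h2 h2
    · omega
    · rcases Nat.lt_or_ge (debtA τ₁ avail t) (debtA τ₂ avail t) with hlt | hge
      · omega
      · have heq : debtA τ₂ avail t = debtA τ₁ avail t := le_antisymm hge ih
        exfalso
        apply h2
        refine ⟨?_, h1.2⟩
        rw [heq]
        calc ((debtA τ₁ avail t : ℝ)) < τ₁ * t := h1.1
          _ ≤ τ₂ * t := mul_le_mul_of_nonneg_right hτ (Nat.cast_nonneg t)
    · omega
    · omega

/-- Monotonicity in τ of the cumulative successes: for τ₁ < τ₂,
Σ_{t=1}^n r_t^{τ₁} = A^{τ₁}_{n+1} ≤ A^{τ₂}_{n+1} = Σ_{t=1}^n r_t^{τ₂} for every horizon n. -/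
theorem cumulative_successes_mono (τ₁ τ₂ : ℝ) (hτ₁ : 0 < τ₁) (hτ : τ₁ < τ₂)
    (avail : ℕ → Bool) (n : ℕ) :
    debtA τ₁ avail (n + 1) ≤ debtA τ₂ avail (n + 1) := by
  exact debtA_mono_tau τ₁ τ₂ hτ.le avail (n + 1)
end

section
/- For the debt-based policy with parameter τ > 0 (packet size c = 1), every maximal 'idle interval' (a maximal run of consecutive slots in which the policy does not attempt transmission, i.e. slots t with A_t ≥ τ·t) has length strictly less than 1/τ. That is, if I = {i, i+1, …, j} is a set of consecutive slots with A_t ≥ τ·t for all t ∈ I, then j − i + 1 < 1/τ. -/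
open scoped Classical

lemma debtA_succ (τ : ℝ) (avail : ℕ → Bool) (t : ℕ) :
    debtA τ avail (t + 1) = if ((debtA τ avail t : ℝ) < τ * t ∧ avail t = true)
      then debtA τ avail t + 1 else debtA τ avail t := by
  conv_lhs => rw [debtA]

lemma debtA_lt (τ : ℝ) (hτ : 0 < τ) (avail : ℕ → Bool) :
    ∀ t : ℕ, (debtA τ avail (t + 1) : ℝ) < τ * t + 1 := by
  intro t
  induction t with
  | zero =>
      simp only [debtA]
      norm_num
  | succ n ih =>
      rw [debtA_succ]
      split_ifs with h
      · have := h.1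
        push_cast at this ⊢
        linarith
      · push_cast at ih ⊢
        nlinarith

lemma debtA_const (τ : ℝ) (avail : ℕ → Bool) (i j : ℕ) (hij : i ≤ j)
    (hidle : ∀ t : ℕ, i ≤ t → t ≤ j → τ * t ≤ (debtA τ avail t : ℝ)) :
    debtA τ avail j = debtA τ avail i := by
  induction j with
  | zero =>
      have : i = 0 := by omega
      rw [this]
  | succ n ih =>
      rcases Nat.lt_or_ge i (n+1) with h | h
      · have hn : i ≤ n := by omega
        have hstep : debtA τ avail (n+1) = debtA τ avail n := by
          rw [debtA_succ]
          split_ifs with hc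
          · exact absurd hc.1 (not_lt.2 (hidle n hn (by omega)))
          · rfl
        rw [hstep]
        exact ih (by omega) (fun t h1 h2 => hidle t h1 (by omega))
      · have : i = n + 1 := le_antisymm (by omega) h
        rw [this]

/-- Any run of consecutive idle slots (slots t with A_t ≥ τ·t, in which the policy stays
silent) has length strictly less than 1/τ. -/
theorem idle_interval_short (τ : ℝ) (hτ : 0 < τ) (avail : ℕ → Bool)
    (i j : ℕ) (hi : 1 ≤ i) (hij : i ≤ j)
    (hidle : ∀ t : ℕ, i ≤ t → t ≤ j → τ * t ≤ (debtA τ avail t : ℝ)) :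
    (j : ℝ) - i + 1 < 1 / τ := by
  obtain ⟨m, rfl⟩ : ∃ m, i = m + 1 := ⟨i - 1, by omega⟩
  have h1 : (debtA τ avail (m+1) : ℝ) < τ * m + 1 := debtA_lt τ hτ avail m
  have h2 : debtA τ avail j = debtA τ avail (m+1) := debtA_const τ avail (m+1) j hij hidle
  have h3 : τ * j ≤ (debtA τ avail j : ℝ) := hidle j hij le_rfl
  rw [h2] at h3
  have h4 : τ * j < τ * m + 1 := lt_of_le_of_lt h3 h1
  rw [lt_div_iff₀ hτ]
  push_cast
  nlinarith
end
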